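/- arXiv:2109.06439 — 3 statements merged into one kernel-verified Lean document; each statement's English description precedes it below -/
import Mathlib

section
/- Let (C, w, l, r, d) be homological data of an oriented knot diagram K on Σ_g, and define the reversed data (C, w, l', r', d') by l'(c) = −r(c), r'(c) = −l(c), and d' = −d (the homological data of the diagram r(K) obtained by reversing the orientation of K: all smoothing classes reverse sign and the roles of the two smoothings interchange, while writhes are unchanged). Then for every γ ∈ ℤ^{2g} with ω(γ, d) = 0 one also has ω(γ, d') = 0, the chord indices computed from the reversed data agree with the original ones (f'_γ(c) = f_γ(c) for all c ∈ C), and the writhe polynomials agree: W'^γ = W^γ, i.e. W_{r(K)}^γ(t) = W_K^γ(t). (Proposition 3.2.) -/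
/-- The standard alternating intersection form on `ℤ^{2g} ≅ H₁(Σ_g, ℤ)`. -/
def intersectionForm (g : ℕ) (x y : Fin (2 * g) → ℤ) : ℤ :=
  ∑ i : Fin g,
    (x ⟨2 * i.val, by omega⟩ * y ⟨2 * i.val + 1, by omega⟩
      - x ⟨2 * i.val + 1, by omega⟩ * y ⟨2 * i.val, by omega⟩)

/-- The chord index `f_γ(c) = w(c)·ω(γ, r(c))`. -/
def chordIndex (g : ℕ) {Cr : Type*} (w : Cr → ℤ) (r : Cr → Fin (2 * g) → ℤ)
    (γ : Fin (2 * g) → ℤ) (c : Cr) : ℤ :=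
  w c * intersectionForm g γ (r c)

/-- The writhe polynomial `W^γ = Σ_{c ∈ C, f_γ(c) ≠ 0} w(c)·t^{f_γ(c)} ∈ ℤ[t, t⁻¹]`. -/
noncomputable def writhePoly (g : ℕ) {Cr : Type*} [Fintype Cr] (w : Cr → ℤ)
    (r : Cr → Fin (2 * g) → ℤ) (γ : Fin (2 * g) → ℤ) : LaurentPolynomial ℤ :=
  ∑ c ∈ Finset.univ.filter (fun c => chordIndex g w r γ c ≠ 0),
    LaurentPolynomial.C (w c) * LaurentPolynomial.T (chordIndex g w r γ c)

section IntersectionForm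

variable {g : ℕ} (γ x y : Fin (2 * g) → ℤ)

lemma intersectionForm_add :
    intersectionForm g γ (x + y) = intersectionForm g γ x + intersectionForm g γ y := by
  simp only [intersectionForm, ← Finset.sum_add_distrib, Pi.add_apply]
  exact Finset.sum_congr rfl fun _ _ => by ring

lemma intersectionForm_neg : intersectionForm g γ (-x) = -intersectionForm g γ x := by
  simp only [intersectionForm, ← Finset.sum_neg_distrib, Pi.neg_apply]
  exact Finset.sum_congr rfl fun _ _ => by ring

lemma intersectionForm_neg_eq_of_add_eq_zero {γ x y : Fin (2 * g) → ℤ}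
    (h : intersectionForm g γ (x + y) = 0) :
    intersectionForm g γ (-x) = intersectionForm g γ y := by
  rw [intersectionForm_add] at h
  rw [intersectionForm_neg]
  omega

end IntersectionForm

lemma writhePoly_congr {g : ℕ} {Cr : Type*} [Fintype Cr] {w : Cr → ℤ}
    {r r' : Cr → Fin (2 * g) → ℤ} {γ : Fin (2 * g) → ℤ}
    (h : ∀ c, chordIndex g w r' γ c = chordIndex g w r γ c) :
    writhePoly g w r' γ = writhePoly g w r γ := by
  simp only [writhePoly, h]

theorem writhePoly_reverse_general (g : ℕ) (Cr : Type*) [Fintype Cr]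
    (w : Cr → ℤ) (l r : Cr → Fin (2 * g) → ℤ) (d : Fin (2 * g) → ℤ)
    (hlr : ∀ c, l c + r c = d)
    (r' : Cr → Fin (2 * g) → ℤ) (d' : Fin (2 * g) → ℤ)
    (hr' : ∀ c, r' c = -(l c)) (hd' : d' = -d)
    (γ : Fin (2 * g) → ℤ) (hγ : intersectionForm g γ d = 0) :
    intersectionForm g γ d' = 0 ∧
    (∀ c : Cr, chordIndex g w r' γ c = chordIndex g w r γ c) ∧
    writhePoly g w r' γ = writhePoly g w r γ := by
  have hchord (c : Cr) : chordIndex g w r' γ c = chordIndex g w r γ c := by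
    rw [chordIndex, chordIndex, hr',
      intersectionForm_neg_eq_of_add_eq_zero (by rw [hlr, hγ])]
  exact ⟨by rw [hd', intersectionForm_neg, hγ, neg_zero], hchord, writhePoly_congr hchord⟩

/-- Proposition 3.2: the reversed data `(C, w, l', r', d')` of `r(K)`, with
`l'(c) = -r(c)`, `r'(c) = -l(c)` and `d' = -d`, satisfies `ω(γ, d') = 0`, yields the same
chord indices `f'_γ(c) = f_γ(c)`, and the same writhe polynomial:
`W_{r(K)}^γ(t) = W_K^γ(t)`. -/
theorem writhePoly_reverse (g : ℕ) (Cr : Type*) [Fintype Cr]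
    (w : Cr → ℤ) (l r : Cr → Fin (2 * g) → ℤ) (d : Fin (2 * g) → ℤ)
    (hw : ∀ c, w c = 1 ∨ w c = -1)
    (hlr : ∀ c, l c + r c = d)
    (l' r' : Cr → Fin (2 * g) → ℤ) (d' : Fin (2 * g) → ℤ)
    (hl' : ∀ c, l' c = -(r c)) (hr' : ∀ c, r' c = -(l c)) (hd' : d' = -d)
    (γ : Fin (2 * g) → ℤ) (hγ : intersectionForm g γ d = 0) :
    intersectionForm g γ d' = 0 ∧
    (∀ c : Cr, chordIndex g w r' γ c = chordIndex g w r γ c) ∧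
    writhePoly g w r' γ = writhePoly g w r γ :=
  writhePoly_reverse_general g Cr w l r d hlr r' d' hr' hd' γ hγ
end

section
/- Let (C, w, l, r, d) be homological data of an oriented knot diagram K on Σ_g and let (C, w, l', r', d') with l'(c) = −r(c), r'(c) = −l(c), d' = −d be the reversed data of r(K). Take γ_K = d and γ_{r(K)} = −d (closed curves representing the classes [K] and [r(K)]; since ω is alternating, ω(d, d) = 0 = ω(−d, −d), so both writhe polynomials are defined). Then the writhe polynomial of the reversed data with respect to −d equals the image of W^d under the ring automorphism of ℤ[t, t⁻¹] sending t to t⁻¹: W'^{−d}(t) = W^d(t⁻¹), i.e. W_{r(K)}^{γ_{r(K)}}(t) = W_K^{γ_K}(t⁻¹). (Corollary 3.3.) -/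
/-!
Reversing the orientation negates every smoothing class and swaps the two smoothings, so the new
chord index is `w(c)·ω(-d, -l(c)) = w(c)·ω(d, l(c))`. Since `l(c) + r(c) = d` and `ω(d, d) = 0`,
this is `-w(c)·ω(d, r(c))`: every chord index changes sign, which on the writhe polynomial is
exactly `t ↦ t⁻¹`.
-/

section IntersectionForm

variable {g : ℕ} (x y z : Fin (2 * g) → ℤ)

theorem intersectionForm_neg_neg : intersectionForm g (-x) (-y) = intersectionForm g x y := by
  simp [intersectionForm]

theorem intersectionForm_self : intersectionForm g x x = 0 := by
  simp [intersectionForm, mul_comm]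

theorem intersectionForm_add_right :
    intersectionForm g x (y + z) = intersectionForm g x y + intersectionForm g x z := by
  simp only [intersectionForm, Pi.add_apply, ← Finset.sum_add_distrib]
  exact Finset.sum_congr rfl fun _ _ => by ring

variable {x y z}

theorem intersectionForm_left_eq_neg_right (h : x + y = z) :
    intersectionForm g z x = -intersectionForm g z y := by
  have := intersectionForm_add_right z x y
  rw [h, intersectionForm_self] at this
  omega

end IntersectionForm

theorem writhePoly_eq_invert_of_chordIndex_eq_neg {g : ℕ} {Cr : Type*} [Fintype Cr]
    {w : Cr → ℤ} {r r' : Cr → Fin (2 * g) → ℤ} {γ γ' : Fin (2 * g) → ℤ}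
    (h : ∀ c, chordIndex g w r' γ' c = -chordIndex g w r γ c) :
    writhePoly g w r' γ' = LaurentPolynomial.invert (writhePoly g w r γ) := by
  rw [writhePoly, writhePoly, map_sum]
  refine Finset.sum_congr (by ext c; simp [h c]) fun c _ => ?_
  simp [h c]

theorem writhePoly_reverse_self_class_general (g : ℕ) (Cr : Type*) [Fintype Cr]
    (w : Cr → ℤ) (l r : Cr → Fin (2 * g) → ℤ) (d : Fin (2 * g) → ℤ)
    (hlr : ∀ c, l c + r c = d)
    (r' : Cr → Fin (2 * g) → ℤ)
    (hr' : ∀ c, r' c = -(l c)) :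
    writhePoly g w r' (-d) = LaurentPolynomial.invert (writhePoly g w r d) :=
  writhePoly_eq_invert_of_chordIndex_eq_neg fun c => by
    rw [chordIndex, chordIndex, hr', intersectionForm_neg_neg,
      intersectionForm_left_eq_neg_right (hlr c), mul_neg]

/-- Corollary 3.3: for the reversed data `(C, w, l', r', d')` of `r(K)` (with
`l'(c) = -r(c)`, `r'(c) = -l(c)`, `d' = -d`), taking the curves `γ_K = d` representing
`[K]` and `γ_{r(K)} = -d = d'` representing `[r(K)]`, one has
`W_{r(K)}^{γ_{r(K)}}(t) = W_K^{γ_K}(t⁻¹)`, where `t ↦ t⁻¹` is the ring automorphism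
`LaurentPolynomial.invert`. -/
theorem writhePoly_reverse_self_class (g : ℕ) (Cr : Type*) [Fintype Cr]
    (w : Cr → ℤ) (l r : Cr → Fin (2 * g) → ℤ) (d : Fin (2 * g) → ℤ)
    (hw : ∀ c, w c = 1 ∨ w c = -1)
    (hlr : ∀ c, l c + r c = d)
    (l' r' : Cr → Fin (2 * g) → ℤ) (d' : Fin (2 * g) → ℤ)
    (hl' : ∀ c, l' c = -(r c)) (hr' : ∀ c, r' c = -(l c)) (hd' : d' = -d) :
    writhePoly g w r' (-d) = LaurentPolynomial.invert (writhePoly g w r d) :=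
  writhePoly_reverse_self_class_general g Cr w l r d hlr r' hr'
end

section
/- Let (C, w, l, r, d) be homological data of an oriented knot diagram K on Σ_g, and define the mirror data (C, w', l, r, d) by w'(c) = −w(c) (the homological data of m(K), obtained by switching all crossings: every writhe reverses sign while the smoothing classes and the class of the diagram are unchanged). Then for every γ ∈ ℤ^{2g} with ω(γ, d) = 0, the writhe polynomial computed from the mirror data satisfies W'^γ = −σ(W^γ), where σ is the ring automorphism of ℤ[t, t⁻¹] sending t to t⁻¹; i.e. W_{m(K)}^γ(t) = −W_K^γ(t⁻¹). (Proposition 3.4.) -/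
open LaurentPolynomial

theorem chordIndex_neg_writhe (g : ℕ) {Cr : Type*} (w : Cr → ℤ) (r : Cr → Fin (2 * g) → ℤ)
    (γ : Fin (2 * g) → ℤ) (c : Cr) :
    chordIndex g (-w) r γ c = -chordIndex g w r γ c := by
  simp only [chordIndex, Pi.neg_apply, neg_mul]

theorem writhePoly_neg_writhe (g : ℕ) {Cr : Type*} [Fintype Cr] (w : Cr → ℤ)
    (r : Cr → Fin (2 * g) → ℤ) (γ : Fin (2 * g) → ℤ) :
    writhePoly g (-w) r γ = -invert (writhePoly g w r γ) := by
  simp only [writhePoly, chordIndex_neg_writhe, neg_ne_zero, map_sum, map_mul, invert_C,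
    invert_T, Pi.neg_apply, map_neg, neg_mul, Finset.sum_neg_distrib]

theorem writhePoly_mirror_general (g : ℕ) (Cr : Type*) [Fintype Cr]
    (w : Cr → ℤ) (r : Cr → Fin (2 * g) → ℤ)
    (w' : Cr → ℤ) (hw' : ∀ c, w' c = -(w c))
    (γ : Fin (2 * g) → ℤ) :
    writhePoly g w' r γ = -(LaurentPolynomial.invert (writhePoly g w r γ)) := by
  obtain rfl : w' = -w := funext hw'
  exact writhePoly_neg_writhe g w r γ

/-- Proposition 3.4: for the mirror data `(C, w', l, r, d)` of `m(K)`, obtained by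
switching all crossings (`w'(c) = -w(c)`, smoothing classes and `d` unchanged), for every
`γ` with `ω(γ, d) = 0` one has `W_{m(K)}^γ(t) = -W_K^γ(t⁻¹)`, where `t ↦ t⁻¹` is the ring
automorphism `LaurentPolynomial.invert`. -/
theorem writhePoly_mirror (g : ℕ) (Cr : Type*) [Fintype Cr]
    (w : Cr → ℤ) (l r : Cr → Fin (2 * g) → ℤ) (d : Fin (2 * g) → ℤ)
    (hw : ∀ c, w c = 1 ∨ w c = -1)
    (hlr : ∀ c, l c + r c = d)
    (w' : Cr → ℤ) (hw' : ∀ c, w' c = -(w c))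
    (γ : Fin (2 * g) → ℤ) (hγ : intersectionForm g γ d = 0) :
    writhePoly g w' r γ = -(LaurentPolynomial.invert (writhePoly g w r γ)) :=
  writhePoly_mirror_general g Cr w r w' hw' γ
end
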